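/- Suppose that for some natural number t and positive integer b, the b-th cyclotomic polynomial Φ_b(x) divides R_t(x) in ℤ[x]. Then 4 does not divide b. -/

import Mathlib

/-!
If `Φ_{4c} ∣ R_t`, then `R_t` vanishes at every primitive `4c`-th root of unity `ω`, in
particular at `-ω = ω^{2c+1}`. Writing `R_t(x) = E(x², x^{2t}) + x O(x², x^{2t})`, both `E`
and `O` vanish at `(ω², ω^{2t})`, and eliminating the second variable shows that `ω²` is a root
of an explicit polynomial `G` of degree 34. Applied to another primitive root `ω^{c+1}` (for `c`
even) or `ω^{c+2}` (for `c` odd), this makes `G` vanish at `ω²` and at `-ω²`, resp. `-ω⁴`;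
but explicit Bézout identities show that `G(x)` has no common root with `G(-x)` nor with
`G(-x²)`.
-/

open Polynomial

/-- The polynomial `R_t(x)`. -/
noncomputable def Rpoly (t : ℕ) : Polynomial ℤ :=
  X ^ (8 * t + 15) + X ^ (8 * t + 14) + X ^ (8 * t + 11) - X ^ (8 * t + 10) - X ^ (8 * t + 8)
    + 2 * X ^ (6 * t + 9) - X ^ (4 * t + 15) - X ^ (4 * t + 11) - X ^ (4 * t + 9)
    + 2 * X ^ (4 * t + 8) - 2 * X ^ (4 * t + 7) + X ^ (4 * t + 6) + X ^ (4 * t + 4)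
    + X ^ (4 * t) - 2 * X ^ (2 * t + 6) + X ^ 7 + X ^ 5 - X ^ 4 - X - 1

section Forms

variable {A : Type*} [CommRing A]

def evenPartR (x u : A) : A :=
  u ^ 4 * x ^ 7 - u ^ 4 * x ^ 5 - u ^ 4 * x ^ 4 + 2 * u ^ 2 * x ^ 4 + u ^ 2 * x ^ 3
    + u ^ 2 * x ^ 2 + u ^ 2 - 2 * u * x ^ 3 - x ^ 2 - 1

def oddPartR (x u : A) : A :=
  u ^ 4 * x ^ 7 + u ^ 4 * x ^ 5 + 2 * u ^ 3 * x ^ 4 - u ^ 2 * x ^ 7 - u ^ 2 * x ^ 5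
    - u ^ 2 * x ^ 4 - 2 * u ^ 2 * x ^ 3 + x ^ 3 + x ^ 2 - 1

theorem aeval_Rpoly (t : ℕ) (x : A) :
    aeval x (Rpoly t) = evenPartR (x ^ 2) (x ^ (2 * t)) + x * oddPartR (x ^ 2) (x ^ (2 * t)) := by
  simp only [Rpoly, evenPartR, oddPartR, map_add, map_sub, map_mul, map_pow, map_ofNat, map_one,
    aeval_X]
  ring

def eliminant (x : A) : A :=
  1 + 2 * x - x ^ 2 - 10 * x ^ 3 - 25 * x ^ 4 - 58 * x ^ 5 - 114 * x ^ 6 - 182 * x ^ 7 - 255 * x ^ 8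
    - 302 * x ^ 9 - 230 * x ^ 10 - 38 * x ^ 11 + 136 * x ^ 12 + 160 * x ^ 13 + 117 * x ^ 14
    + 222 * x ^ 15 + 483 * x ^ 16 + 640 * x ^ 17 + 483 * x ^ 18 + 222 * x ^ 19 + 117 * x ^ 20
    + 160 * x ^ 21 + 136 * x ^ 22 - 38 * x ^ 23 - 230 * x ^ 24 - 302 * x ^ 25 - 255 * x ^ 26
    - 182 * x ^ 27 - 114 * x ^ 28 - 58 * x ^ 29 - 25 * x ^ 30 - 10 * x ^ 31 - x ^ 32 + 2 * x ^ 33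
    + x ^ 34

def evenCofactor (x u : A) : A :=
  (-2 * x ^ 13 + 9 * x ^ 15 + 14 * x ^ 16 + 10 * x ^ 17 + 24 * x ^ 18 + 21 * x ^ 19 - 39 * x ^ 20
    - 78 * x ^ 21 - 9 * x ^ 22 + 54 * x ^ 23 + 42 * x ^ 24 - 91 * x ^ 25 - 87 * x ^ 26 + 3 * x ^ 27
    + 122 * x ^ 28 + 55 * x ^ 29 - 27 * x ^ 30 - 35 * x ^ 31 + 24 * x ^ 33 - 8 * x ^ 34 - 7 * x ^ 35
    - 4 * x ^ 36 + 8 * x ^ 37 - x ^ 39 - 2 * x ^ 40 - 2 * x ^ 41 - x ^ 42 - x ^ 44) + (2 * x ^ 14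
    - 8 * x ^ 16 - 20 * x ^ 17 - 12 * x ^ 18 + 4 * x ^ 19 + 22 * x ^ 20 - 10 * x ^ 21 - 28 * x ^ 22
    + 80 * x ^ 24 + 60 * x ^ 25 + 52 * x ^ 26 - 36 * x ^ 27 - 10 * x ^ 28 - 4 * x ^ 29 + 34 * x ^ 30
    - 26 * x ^ 31 - 58 * x ^ 32 - 68 * x ^ 33 - 76 * x ^ 34 - 18 * x ^ 35 - 4 * x ^ 36 + 18 * x ^ 37
    + 22 * x ^ 38 + 32 * x ^ 39 + 14 * x ^ 40 + 12 * x ^ 41 + 12 * x ^ 42 + 4 * x ^ 43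
    + 2 * x ^ 45) * u + (x ^ 15 - 3 * x ^ 17 - 3 * x ^ 18 - 8 * x ^ 19 - 40 * x ^ 20 - 66 * x ^ 21
    - 21 * x ^ 22 + 31 * x ^ 23 + 36 * x ^ 24 - x ^ 25 + 24 * x ^ 26 + 47 * x ^ 27 + 84 * x ^ 28
    + 21 * x ^ 29 - 40 * x ^ 30 - 19 * x ^ 31 + 35 * x ^ 32 + 51 * x ^ 33 + 12 * x ^ 34 - 7 * x ^ 35
    - 37 * x ^ 36 - 27 * x ^ 37 - 17 * x ^ 38 - 17 * x ^ 39 - 3 * x ^ 40 + x ^ 41 - 3 * x ^ 42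
    + x ^ 44) * u ^ 2 + (2 * x ^ 19 - 10 * x ^ 21 - 24 * x ^ 22 - 14 * x ^ 23 - 6 * x ^ 24
    + 10 * x ^ 25 + 4 * x ^ 26 + 12 * x ^ 27 - 10 * x ^ 28 + 32 * x ^ 29 + 2 * x ^ 30 + 14 * x ^ 31
    - 8 * x ^ 32 + 6 * x ^ 33 + 20 * x ^ 34 + 28 * x ^ 35 + 28 * x ^ 36 - 10 * x ^ 37 - 2 * x ^ 38
    - 20 * x ^ 39 - 14 * x ^ 40 - 8 * x ^ 41 - 10 * x ^ 42 - 4 * x ^ 43 - 2 * x ^ 45) * u ^ 3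

def oddCofactor (x u : A) : A :=
  (-x ^ 10 + 3 * x ^ 12 + 7 * x ^ 13 + 9 * x ^ 14 + 21 * x ^ 15 + 25 * x ^ 16 + 23 * x ^ 17
    + 13 * x ^ 18 - 9 * x ^ 19 - 68 * x ^ 20 - 59 * x ^ 21 - 11 * x ^ 22 + 47 * x ^ 23 - 36 * x ^ 24
    - 75 * x ^ 25 - 100 * x ^ 26 + 81 * x ^ 27 + 104 * x ^ 28 + 27 * x ^ 29 - 66 * x ^ 30
    - 37 * x ^ 31 + 55 * x ^ 32 + 58 * x ^ 33 + 44 * x ^ 34 - 24 * x ^ 35 - 5 * x ^ 36 - 7 * x ^ 37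
    - 20 * x ^ 38 - 7 * x ^ 39 - 2 * x ^ 40 - 6 * x ^ 41) + (-2 * x ^ 14 + 8 * x ^ 16 + 18 * x ^ 17
    + 10 * x ^ 18 + 14 * x ^ 19 - 2 * x ^ 20 - 18 * x ^ 21 - 24 * x ^ 22 + 68 * x ^ 23 + 62 * x ^ 24
    + 2 * x ^ 25 - 110 * x ^ 26 - 44 * x ^ 27 + 32 * x ^ 28 + 60 * x ^ 29 - 42 * x ^ 30
    - 122 * x ^ 31 - 68 * x ^ 32 - 16 * x ^ 33 + 14 * x ^ 34 + 2 * x ^ 35 + 30 * x ^ 36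
    + 32 * x ^ 37 + 28 * x ^ 38 + 20 * x ^ 39 + 8 * x ^ 40 + 4 * x ^ 41 + 4 * x ^ 42) * u + (x ^ 14
    + x ^ 15 - 4 * x ^ 16 - 12 * x ^ 17 - 11 * x ^ 18 - 9 * x ^ 19 - 16 * x ^ 20 - 18 * x ^ 21
    + 10 * x ^ 22 + 43 * x ^ 23 + 46 * x ^ 24 + 13 * x ^ 25 + 5 * x ^ 26 + 19 * x ^ 27 + 16 * x ^ 28
    - 37 * x ^ 29 - 47 * x ^ 30 - 8 * x ^ 31 + 37 * x ^ 32 + 18 * x ^ 33 - 31 * x ^ 34 - 37 * x ^ 35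
    - x ^ 36 + 24 * x ^ 37 + 8 * x ^ 38 - x ^ 39 - x ^ 40 + x ^ 42 - x ^ 44) * u ^ 2 + (2 * x ^ 18
    + 2 * x ^ 19 - 12 * x ^ 20 - 38 * x ^ 21 - 26 * x ^ 22 + 28 * x ^ 23 + 54 * x ^ 24 - 32 * x ^ 26
    - 8 * x ^ 27 + 50 * x ^ 28 + 30 * x ^ 29 - 24 * x ^ 30 - 56 * x ^ 31 + 20 * x ^ 32 + 68 * x ^ 33
    + 36 * x ^ 34 - 18 * x ^ 35 - 38 * x ^ 36 - 22 * x ^ 37 - 12 * x ^ 38 - 2 * x ^ 39 - 8 * x ^ 40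
    + 4 * x ^ 41 + 8 * x ^ 42 + 2 * x ^ 45) * u ^ 3

def negCofactor (x : A) : A :=
  59311300334236936979240 - 242777596908216503694653 * x + 544866494150669944368546 * x ^ 2
    - 950190525966966802862004 * x ^ 3 + 1500254085358361937627024 * x ^ 4
    - 2008464232772316011050231 * x ^ 5 + 2317327262426528141664582 * x ^ 6
    - 2615660495860763747317207 * x ^ 7 + 2912946835411258315769652 * x ^ 8
    - 2132065043820676912701798 * x ^ 9 - 179261151806900459282438 * x ^ 10
    + 2672034777930211816079218 * x ^ 11 - 3459140417410282264237216 * x ^ 12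
    + 2870984191094781196524134 * x ^ 13 - 3479729937923498466040724 * x ^ 14
    + 5855774786279664239763985 * x ^ 15 - 7422120220979249020412910 * x ^ 16
    + 5630954855736121478499196 * x ^ 17 - 2476563462092727244759150 * x ^ 18
    + 847823140304211199871295 * x ^ 19 - 943078551243991541027084 * x ^ 20
    + 607774688986601907351964 * x ^ 21 + 1139409160677325467869444 * x ^ 22
    - 2971739789037253750504442 * x ^ 23 + 3529683613424371976673142 * x ^ 24
    - 2883486220819538961197108 * x ^ 25 + 2016365470594230145924372 * x ^ 26
    - 1238861402337448872290997 * x ^ 27 + 621302198668566116775482 * x ^ 28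
    - 264270714333514845403021 * x ^ 29 + 104399967550431398953524 * x ^ 30
    - 9669930424943864328134 * x ^ 31 - 21265026675135917574314 * x ^ 32
    + 10632513337567958787157 * x ^ 33

def negSqCofactorLeft (x : A) : A :=
  475257678060836287322039261746793675438846156629729292137609113923479623
    - 407456846998110207874014223581475297998719643001143342637791504047849898 * x
    - 902586480738002855672389573563974363007989261404693049588821374222977970 * x ^ 2
    + 1195241607407677108932347036276253566169694572042479184055807741032464086 * x ^ 3
    - 920984078253542558907226350245998636853741872692836331398218393578084831 * x ^ 4
    + 81724183490851739859059769845729280021279284128195343967278784406219808 * x ^ 5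
    + 3385767380896608975080897821108758758589757198929182122206505964169182384 * x ^ 6
    - 1929210278513263363758842994210533427899312042992108987501874073731958236 * x ^ 7
    - 7388749874852241368067530520016024594481292491843205693040076604282290237 * x ^ 8
    + 4495932147258722782960192646461532437647605589282613430690978432911182022 * x ^ 9
    + 18744960995379760291493508272449496066928811100162097445195616544464124921 * x ^ 10
    - 13449129585357934260093945326063519645014371015154059957632429270204535990 * x ^ 11
    - 35447762443220245962817551173654113177461745447976108149537847946335489697 * x ^ 12
    + 28453706632797139772330845863050958645290032702318905830751025005431723608 * x ^ 13
    + 52116125120058644388365453750535378429850375040393997784114087460593304298 * x ^ 14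
    - 43346629459286504357296135124131090312390133328280595210111444746353475434 * x ^ 15
    - 74734255380387996756044797644910064668831410329358155538195606865647667834 * x ^ 16
    + 69124783004175916714990573398629643450424294537569881482172315930853457632 * x ^ 17
    + 74284235154747512518808136469682396432044312655773491510683811218388857388 * x ^ 18
    - 75605192774394872782106092344970715879071034942952210157786344383620928590 * x ^ 19
    - 34807002345380454157510447519488564259366470375869236794824170617137148904 * x ^ 20
    + 41539836179253114179440958041106085713612850428650727035572238262059702692 * x ^ 21
    - 23053765198895552950404723032134392057897620556316440675924045356284875517 * x ^ 22
    + 17767280894352719088410308333088672213621816196842915914746720404608839588 * x ^ 23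
    + 44944683770231769857372390499878385216071451879786345884759060506458550798 * x ^ 24
    - 43664659512233197052267555982612579741706451302056262065770179835641965456 * x ^ 25
    - 24712064950850880294137816321767939355948700220975246913559255494861737486 * x ^ 26
    + 19654310766162996431006945829713210918241871550883268613772807510094133220 * x ^ 27
    + 24542086480548298089538259594854420914627515849235555301102527897699473274 * x ^ 28
    - 10660327501825837532743125640229628155939787688683681720737188047950436360 * x ^ 29
    - 82889791724425535891210781185509590057478475412753902500682755013422593234 * x ^ 30
    + 62442353218473420583408222846466703971908572681135939017022582393266040222 * x ^ 31
    + 161163382477736549472422859385843744927849368341849941880910725384711630218 * x ^ 32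
    - 149661264291323352149221887681714892190203167001004554216704238348318364522 * x ^ 33
    - 149390620558203683630806960794399437759796680320345160127763661407287592521 * x ^ 34
    + 148448582710663995167958277996698485973384180627218123638772072710910412548 * x ^ 35
    + 74562884172103053419123353449867324935227743332522107615251509197192347192 * x ^ 36
    - 75596897013610992182570335259672372139698605004497419673865720533544488812 * x ^ 37
    - 23298879044470821967742390533542492274083394082484983424772238750733002512 * x ^ 38
    + 19248130437794712506480622214606212175739634882717305054805977573139418428 * x ^ 39
    + 34083698094687723374918694656565986741389565109293801907632099841751994941 * x ^ 40
    - 29468138845375720900764025910897962973728839321684691506682100872019050432 * x ^ 41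
    - 49119421421553514189648269116807644910599523506673719494199753421283764713 * x ^ 42
    + 51371945664681663160364840093139876790408914648034548816713788624095296496 * x ^ 43
    + 17421729071711557604631580745004657930003099196472726980272400588493027155 * x ^ 44
    - 26102756884320066104423448561707695682425720765397800263041023715297197478 * x ^ 45
    + 39958010373091746451933922533558139774407672289915182543380484738289079860 * x ^ 46
    - 30045785507419752931634226346490357730963759615779070878077232593745317974 * x ^ 47
    - 75841627496826681859322626467522865498867518467843848192169978645818757107 * x ^ 48
    + 69963800702785921429999051025015098885789152490783486390805714106883356788 * x ^ 49
    + 69445028339361762740601371412771682616203563722851374440030281760620272225 * x ^ 50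
    - 66293300764811542680752900482880960892910707506872074783607644954534610422 * x ^ 51
    - 51435139846876900926715940061076223612880360804614352100215230167870454119 * x ^ 52
    + 49749517594950361347789795610724642129127458072733915762291329471570566320 * x ^ 53
    + 34615197344626043646602611898150954692025858406171757631508192633629410190 * x ^ 54
    - 34218112160030752350118364269904895712505250553592417311242941862046295908 * x ^ 55
    - 18626665350828158876676612801865223722848391338378583644760344476963053909 * x ^ 56
    + 18798453664268237121866585112705677714019807134862012302127930312797720154 * x ^ 57
    + 7919072588822588286304189411542974711219563356817695154539092675786730060 * x ^ 58
    - 7959001530496418701257754797375424545379243143564653554235749778467555628 * x ^ 59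
    - 3668113655032876717012975300385375175262580817917174454977551034757502496 * x ^ 60
    + 3823220134659760175126967158362366003547265791330988844128045819605500142 * x ^ 61
    + 823913691356991433255219200095495664005615116184651028343244680364209085 * x ^ 62
    - 977475672932793971556776008694723593723819115190338982461609950570215846 * x ^ 63
    + 566719903612252412060239295963262819661736034814251970431907866874765813 * x ^ 64
    - 540479031441994459646362841449910124655828159902757133406095506102937688 * x ^ 65
    - 414042606546550056822722465549332779607180865872461708316556751001366482 * x ^ 66
    + 447234129053976410098206584681233454856723497081488844525211904149792668 * x ^ 67

def negSqCofactorRight (x : A) : A :=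
  36980696839342995637789941557356535141890114595902122926443664824520005
    - 543058509123562366770064299912112052878972670258315241637426723799109348 * x
    + 2266719246473745550018037165588431704728054933228513272854900825891197399 * x ^ 2
    + 3868934269431456534218681904913932510478080533546426010585281195002219490 * x ^ 3
    + 10005207054026824685354846284718825992088320933987912459396339661505585087 * x ^ 4
    + 18502954955358982099659065332975681623338280825583278164566428674123534556 * x ^ 5
    + 37371758788673754346176968503478390684599674762397198852376936381349035240 * x ^ 6
    + 49912829340735918654904903979189266165942975433699884362746543868756629952 * x ^ 7
    + 68894343456335925470522353217911893236363598084814047610853437138672198937 * x ^ 8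
    + 68511993935904732767407706067840030969546468402859978121426410734684742338 * x ^ 9
    + 33237518320907365082831132868353225436536962333513531091035353532094358493 * x ^ 10
    - 16912425614945362843908063626221561107825109305200054641762185760703850332 * x ^ 11
    - 46784573908809623375514457982904840218523191153456267386594068819959443722 * x ^ 12
    - 28918672054361165031696415729931370522078610647583389701469882832248593798 * x ^ 13
    - 32631922690060942246722107671306036719459640000644740987492670278366230788 * x ^ 14
    - 75092940398170871664147483305159895073052857508548683977730479014304943728 * x ^ 15
    - 149520862233369385204007885207488015197248284115679105859938785491214359405 * x ^ 16
    - 144089050853338288501267390960705825655819510506138490559256449492956749406 * x ^ 17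
    - 77728995110157160609545261106299782811862880941236502579594296522188036415 * x ^ 18
    - 25428963502489428733610008580771611225658014296023369613320750743159267046 * x ^ 19
    - 28253213060789396540682970011642841178143463004123351054832494106743565679 * x ^ 20
    - 43465456831090177670555543750108658228862235333917990732765987313164204390 * x ^ 21
    - 15473277111392029987717482188971714466970394787677239238099102598973607600 * x ^ 22
    + 35548259384130897658106327387256267746171202195828705499027786692695008224 * x ^ 23
    + 72190118314211369952208550022129932371188041200029862913504960368641158977 * x ^ 24
    + 67308865508499703316107255173484407643678543215037678562649413155117408084 * x ^ 25
    + 49751594499467556497924170407600433774095075715785627349303951278306558451 * x ^ 26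
    + 33549411192357343912516195698434278385492044915796143839488949762142718056 * x ^ 27
    + 18624426993890671976498069988869781734744536872312316010461655277439669486 * x ^ 28
    + 7739410097058464288306870327909247408261006946022576504659211108210861712 * x ^ 29
    + 3611685540142145024644448360573290938397442133352657071848111321231232053 * x ^ 30
    + 921330115481118163193601187867342229013466394566191705513997103955877984 * x ^ 31
    - 480425651561402763373690703813134130106266128290515980733867057298218854 * x ^ 32
    - 447234129053976410098206584681233454856723497081488844525211904149792668 * x ^ 33

/-- The cofactors come from eliminating `u` between `evenPartR x u` and `oddPartR x u`. -/
theorem evenCofactor_mul_add_oddCofactor_mul (x u : A) :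
    evenCofactor x u * evenPartR x u + oddCofactor x u * oddPartR x u
      = x ^ 10 * (x - 1) ^ 2 * eliminant x := by
  simp only [evenCofactor, oddCofactor, evenPartR, oddPartR, eliminant]
  ring

theorem negCofactor_mul_add_negCofactor_neg_mul (x : A) :
    negCofactor x * eliminant x + negCofactor (-x) * eliminant (-x) = 118622600668473873958480 := by
  simp only [negCofactor, eliminant]
  ring

theorem eliminant_neg_ne_zero [CharZero A] {x : A} (h : eliminant x = 0) :
    eliminant (-x) ≠ 0 := by
  intro hneg
  have key := negCofactor_mul_add_negCofactor_neg_mul x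
  rw [h, hneg] at key
  norm_num at key

theorem negSqCofactorLeft_mul_add_negSqCofactorRight_mul (x : A) :
    negSqCofactorLeft x * eliminant x + negSqCofactorRight x * eliminant (-x ^ 2)
      = 512238374900179282959829203304150210580736271225631415064052778747999628 := by
  simp only [negSqCofactorLeft, negSqCofactorRight, eliminant]
  ring

theorem eliminant_neg_sq_ne_zero [CharZero A] {x : A} (h : eliminant x = 0) :
    eliminant (-x ^ 2) ≠ 0 := by
  intro hneg
  have key := negSqCofactorLeft_mul_add_negSqCofactorRight_mul x
  rw [h, hneg] at key
  norm_num at key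

end Forms

section Roots

variable {K : Type*} [CommRing K] [IsDomain K]

theorem evenPartR_eq_zero_and_oddPartR_eq_zero [CharZero K] {t : ℕ} {x : K} (hx : x ≠ 0)
    (hpos : aeval x (Rpoly t) = 0) (hneg : aeval (-x) (Rpoly t) = 0) :
    evenPartR (x ^ 2) (x ^ (2 * t)) = 0 ∧ oddPartR (x ^ 2) (x ^ (2 * t)) = 0 := by
  rw [aeval_Rpoly] at hpos hneg
  rw [neg_sq, (even_two_mul t).neg_pow] at hneg
  constructor
  · have h2 : (2 : K) * evenPartR (x ^ 2) (x ^ (2 * t)) = 0 := by linear_combination hpos + hneg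
    simpa using h2
  · have h2 : (2 * x) * oddPartR (x ^ 2) (x ^ (2 * t)) = 0 := by linear_combination hpos - hneg
    simpa [hx] using h2

theorem eliminant_eq_zero {x u : K} (hx₀ : x ≠ 0) (hx₁ : x ≠ 1) (hE : evenPartR x u = 0)
    (hO : oddPartR x u = 0) : eliminant x = 0 := by
  have h := evenCofactor_mul_add_oddCofactor_mul x u
  rw [hE, hO, mul_zero, mul_zero, add_zero, eq_comm] at h
  simpa [hx₀, sub_eq_zero, hx₁] using h

theorem aeval_eq_zero_of_cyclotomic_dvd {n : ℕ} (hn : 0 < n) {μ : K} (hμ : IsPrimitiveRoot μ n)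
    {P : ℤ[X]} (h : cyclotomic n ℤ ∣ P) : aeval μ P = 0 := by
  obtain ⟨Q, rfl⟩ := h
  have hroot := hμ.isRoot_cyclotomic hn
  rw [map_mul, aeval_def, eval₂_eq_eval_map, map_cyclotomic, hroot.eq_zero, zero_mul]

theorem IsPrimitiveRoot.pow_eq_neg_one {m : ℕ} (hm : m ≠ 0) {ω : K}
    (hω : IsPrimitiveRoot ω (2 * m)) : ω ^ m = -1 := by
  have h := hω.pow_of_dvd hm (dvd_mul_left m 2)
  rw [Nat.mul_div_cancel _ (Nat.pos_of_ne_zero hm)] at h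
  exact h.eq_neg_one_of_two_right

theorem Nat.coprime_four_mul_of_odd {c j k : ℕ} (hk : k.Coprime c) (hodd : Odd (c * j + k)) :
    (c * j + k).Coprime (4 * c) :=
  Nat.Coprime.mul_right (hodd.coprime_two_right.pow_right 2)
    ((Nat.coprime_mul_left_add_left k c j).mpr hk)

theorem eliminant_sq_eq_zero [CharZero K] {t c : ℕ} (hc : 0 < c)
    (h : cyclotomic (4 * c) ℤ ∣ Rpoly t) {ω : K} (hω : IsPrimitiveRoot ω (4 * c)) :
    eliminant (ω ^ 2) = 0 := by
  have hn : 0 < 4 * c := by omega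
  have hhalf : ω ^ (2 * c) = -1 :=
    IsPrimitiveRoot.pow_eq_neg_one (by omega) (by rwa [← mul_assoc])
  have hneg : IsPrimitiveRoot (-ω) (4 * c) := by
    have hcop : (c * 2 + 1).Coprime (4 * c) :=
      Nat.coprime_four_mul_of_odd (Nat.coprime_one_left c) ⟨c, by ring⟩
    convert hω.pow_of_coprime _ hcop using 1
    rw [pow_succ, mul_comm c, hhalf, neg_one_mul]
  obtain ⟨hE, hO⟩ := evenPartR_eq_zero_and_oddPartR_eq_zero (hω.ne_zero hn.ne')
    (aeval_eq_zero_of_cyclotomic_dvd hn hω h) (aeval_eq_zero_of_cyclotomic_dvd hn hneg h)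
  refine eliminant_eq_zero (pow_ne_zero 2 (hω.ne_zero hn.ne')) (fun h1 => ?_) hE hO
  have := Nat.le_of_dvd two_pos (hω.dvd_of_pow_eq_one 2 h1)
  omega

end Roots

/-- If the `b`-th cyclotomic polynomial divides `R_t(x)` in `ℤ[x]` for a positive
integer `b`, then `4` does not divide `b`. -/
theorem not_four_dvd_of_cyclotomic_dvd_R (t b : ℕ) (hb : 0 < b)
    (h : Polynomial.cyclotomic b ℤ ∣ Rpoly t) :
    ¬ (4 ∣ b) := by
  rintro ⟨c, rfl⟩
  have hc : 0 < c := by omega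
  obtain ⟨ω, hω⟩ : ∃ ω : ℂ, IsPrimitiveRoot ω (4 * c) :=
    ⟨_, Complex.isPrimitiveRoot_exp _ (by omega)⟩
  have hhalf : ω ^ (2 * c) = -1 :=
    IsPrimitiveRoot.pow_eq_neg_one (by omega) (by rwa [← mul_assoc])
  have hshift : ∀ k, (ω ^ (c + k)) ^ 2 = -(ω ^ k) ^ 2 := fun k => by
    rw [← pow_mul, add_mul, pow_add, mul_comm c, hhalf]
    ring
  have hroot : ∀ k, k.Coprime c → Odd (c + k) → eliminant ((ω ^ (c + k)) ^ 2) = 0 :=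
    fun k hk hodd => eliminant_sq_eq_zero hc h <| hω.pow_of_coprime _ <| by
      simpa using Nat.coprime_four_mul_of_odd (j := 1) hk (by simpa using hodd)
  have hg : eliminant (ω ^ 2) = 0 := eliminant_sq_eq_zero hc h hω
  rcases Nat.even_or_odd c with hc2 | hc2
  · refine eliminant_neg_ne_zero hg ?_
    simpa [hshift] using hroot 1 (Nat.coprime_one_left c) hc2.add_one
  · refine eliminant_neg_sq_ne_zero hg ?_
    simpa [hshift, ← pow_mul] using hroot 2 (Nat.coprime_two_left.mpr hc2)
      (hc2.add_even even_two)
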